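/- Generalization bound via population within-class variance: For a K-class classifier f(x) = W g(x) with rows w₁,…,w_K of W, the misclassification probability Pr(argmax_i f(x)_i ≠ y) is at most Σ_{c=1}^K p_Y(c) Σ_{k≠c} (1 + max{⟨μ_c, (w_c−w_k)/‖w_c−w_k‖⟩, 0}² / V_c)^{-1}, where μ_c = E[g(X) | Y=c] and V_c = E[‖g(X) − μ_c‖² | Y=c], assuming w_c ≠ w_k for all k ≠ c. -/

import Mathlib

open MeasureTheory ProbabilityTheory Matrix Finset

/-!
A sample of class `c` is misclassified only if `(w_c - w_k) ⬝ᵥ g(X) ≤ 0` for some `k ≠ c`, so a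
union bound reduces the claim to one such event per pair `(c, k)` under `P[· | Y = c]`. Projecting
`g(X)` onto the unit vector `e` along `w_c - w_k` gives a real variable with mean `⟨μ_c, e⟩` and,
by Cauchy–Schwarz, variance at most `V_c`; Cantelli's one-sided Chebyshev inequality
`P(Z ≤ 0) ≤ Var Z / (Var Z + (E Z)²)` (for `E Z > 0`) then bounds the probability of that event.
-/

section Cantelli

variable {Ω : Type*} [MeasurableSpace Ω] {ν : Measure Ω} [IsProbabilityMeasure ν] {Z : Ω → ℝ}

lemma measureReal_nonpos_le_variance_add_sq_div (hZ : MemLp Z 2 ν) {u : ℝ} (hu : 0 < ν[Z] + u) :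
    ν.real {ω | Z ω ≤ 0} ≤ (Var[Z; ν] + u ^ 2) / (ν[Z] + u) ^ 2 := by
  set t := ν[Z] + u
  set W : Ω → ℝ := fun ω => Z ω - t
  have hW : MemLp W 2 ν := hZ.sub (memLp_const t)
  have hmean : ν[W] = -u := by
    rw [integral_sub (hZ.integrable one_le_two) (integrable_const t)]
    simp [t]
  have hsecond : ν[W ^ 2] = Var[Z; ν] + u ^ 2 := by
    rw [← variance_sub_const hZ.aestronglyMeasurable t, variance_eq_sub hW, hmean]
    ring
  have hsub : {ω | Z ω ≤ 0} ⊆ {ω | t ^ 2 ≤ (W ^ 2) ω} := fun ω hω => by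
    simp only [Set.mem_ofPred_eq, Pi.pow_apply, W] at hω ⊢
    nlinarith
  have hmarkov := mul_meas_ge_le_integral_of_nonneg (.of_forall fun ω => sq_nonneg (W ω))
    hW.integrable_sq (t ^ 2)
  rw [le_div_iff₀ (by positivity), mul_comm, ← hsecond]
  exact (mul_le_mul_of_nonneg_left (measureReal_mono hsub) (by positivity)).trans hmarkov

theorem measureReal_nonpos_le_inv_one_add {V : ℝ} (hZ : MemLp Z 2 ν) (hV : Var[Z; ν] ≤ V) :
    ν.real {ω | Z ω ≤ 0} ≤ (1 + max ν[Z] 0 ^ 2 / V)⁻¹ := by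
  set a := ν[Z]
  have hV0 : 0 ≤ V := (variance_nonneg Z ν).trans hV
  rcases le_or_gt a 0 with ha | ha
  · simp [max_eq_right ha]
  rcases hV0.eq_or_lt with rfl | hV0
  · simp
  -- `u = V / a` minimises the bound of `measureReal_nonpos_le_variance_add_sq_div`
  have hu : 0 < a + V / a := by positivity
  calc ν.real {ω | Z ω ≤ 0} ≤ (Var[Z; ν] + (V / a) ^ 2) / (a + V / a) ^ 2 :=
        measureReal_nonpos_le_variance_add_sq_div hZ hu
    _ ≤ (V + (V / a) ^ 2) / (a + V / a) ^ 2 := by gcongr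
    _ = (1 + max a 0 ^ 2 / V)⁻¹ := by
        rw [max_eq_left ha.le]
        field_simp
        ring

end Cantelli

section DotProduct

variable {Ω ι : Type*} [MeasurableSpace Ω] {ν : Measure Ω} [Fintype ι] {G : Ω → ι → ℝ}

lemma memLp_dotProduct (hG : ∀ j, MemLp (fun ω => G ω j) 2 ν) (v : ι → ℝ) :
    MemLp (fun ω => v ⬝ᵥ G ω) 2 ν :=
  memLp_finsetSum _ fun j _ => (hG j).const_mul (v j)

lemma integral_dotProduct (hG : ∀ j, Integrable (fun ω => G ω j) ν) (v : ι → ℝ) :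
    ∫ ω, v ⬝ᵥ G ω ∂ν = v ⬝ᵥ fun j => ∫ ω, G ω j ∂ν := by
  simp only [dotProduct]
  rw [integral_finsetSum _ fun j _ => (hG j).const_mul (v j)]
  simp only [integral_const_mul]

lemma variance_dotProduct_le [IsFiniteMeasure ν] (hG : ∀ j, MemLp (fun ω => G ω j) 2 ν)
    (v : ι → ℝ) :
    Var[fun ω => v ⬝ᵥ G ω; ν] ≤
      (v ⬝ᵥ v) * ∫ ω, ∑ j, (G ω j - ∫ ω', G ω' j ∂ν) ^ 2 ∂ν := by
  set M : ι → ℝ := fun j => ∫ ω, G ω j ∂ν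
  have hcentered : ∀ j, MemLp (fun ω => G ω j - M j) 2 ν := fun j => (hG j).sub (memLp_const _)
  rw [variance_eq_integral (memLp_dotProduct hG v).aemeasurable,
    integral_dotProduct (fun j => (hG j).integrable one_le_two), ← integral_const_mul]
  refine integral_mono (memLp_dotProduct hG v |>.sub (memLp_const _)).integrable_sq
    ((integrable_finsetSum _ fun j _ => (hcentered j).integrable_sq).const_mul _) fun ω => ?_
  calc (v ⬝ᵥ G ω - v ⬝ᵥ M) ^ 2 = (∑ j, v j * (G ω j - M j)) ^ 2 := by
        rw [← dotProduct_sub]; rfl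
    _ ≤ (∑ j, v j ^ 2) * ∑ j, (G ω j - M j) ^ 2 := sum_mul_sq_le_sq_mul_sq _ _ _
    _ = (v ⬝ᵥ v) * ∑ j, (G ω j - M j) ^ 2 := by simp only [dotProduct, sq]

lemma sum_sq_pos {v : ι → ℝ} (hv : v ≠ 0) : 0 < ∑ j, v j ^ 2 := by
  obtain ⟨j, hj⟩ := Function.ne_iff.mp hv
  exact sum_pos' (fun j _ => sq_nonneg _) ⟨j, mem_univ _, sq_pos_of_ne_zero hj⟩

lemma dotProduct_self_inv_sqrt_smul {v : ι → ℝ} (hv : v ≠ 0) :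
    ((√(∑ j, v j ^ 2))⁻¹ • v) ⬝ᵥ ((√(∑ j, v j ^ 2))⁻¹ • v) = 1 := by
  have hpos := sum_sq_pos hv
  rw [smul_dotProduct, dotProduct_smul, smul_smul, ← sq, inv_pow, Real.sq_sqrt hpos.le]
  simp only [dotProduct, ← sq, smul_eq_mul]
  exact inv_mul_cancel₀ hpos.ne'

theorem measureReal_dotProduct_nonpos_le [IsProbabilityMeasure ν]
    (hG : ∀ j, MemLp (fun ω => G ω j) 2 ν) {v : ι → ℝ} (hv : v ≠ 0) {M : ι → ℝ}
    (hM : ∀ j, M j = ∫ ω, G ω j ∂ν) :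
    ν.real {ω | v ⬝ᵥ G ω ≤ 0} ≤
      (1 + max (M ⬝ᵥ ((√(∑ j, v j ^ 2))⁻¹ • v)) 0 ^ 2 / ∫ ω, ∑ j, (G ω j - M j) ^ 2 ∂ν)⁻¹ := by
  obtain rfl : M = fun j => ∫ ω, G ω j ∂ν := funext hM
  set e := (√(∑ j, v j ^ 2))⁻¹ • v
  have hscale : 0 < (√(∑ j, v j ^ 2))⁻¹ := inv_pos.mpr (Real.sqrt_pos.mpr (sum_sq_pos hv))
  have hset : {ω | v ⬝ᵥ G ω ≤ 0} = {ω | e ⬝ᵥ G ω ≤ 0} := by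
    ext ω
    simp only [Set.mem_ofPred_eq, e, smul_dotProduct, smul_nonpos_iff_nonpos_of_pos_left hscale]
  have hmean : ν[fun ω => e ⬝ᵥ G ω] = (fun j => ∫ ω, G ω j ∂ν) ⬝ᵥ e := by
    rw [integral_dotProduct (fun j => (hG j).integrable one_le_two), dotProduct_comm]
  have hvar := variance_dotProduct_le hG e
  rw [dotProduct_self_inv_sqrt_smul hv, one_mul] at hvar
  rw [hset, ← hmean]
  exact measureReal_nonpos_le_inv_one_add (memLp_dotProduct hG e) hvar

end DotProduct

section ClassDecomposition

variable {Ω ι : Type*} [MeasurableSpace Ω] {μ : Measure Ω}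

lemma measureReal_exists_ne_le_sum [Fintype ι] [DecidableEq ι] (Y : Ω → ι)
    (E : ι → ι → Set Ω) :
    μ.real {ω | ∃ k, k ≠ Y ω ∧ ω ∈ E (Y ω) k} ≤
      ∑ c, ∑ k ∈ univ \ {c}, μ.real ({ω | Y ω = c} ∩ E c k) := by
  have hset : {ω | ∃ k, k ≠ Y ω ∧ ω ∈ E (Y ω) k} =
      ⋃ c, ⋃ k ∈ univ \ {c}, {ω | Y ω = c} ∩ E c k := by
    ext ω
    simp
  rw [hset]
  exact (measureReal_iUnion_fintype_le _).trans
    (sum_le_sum fun c _ => measureReal_biUnion_finset_le _ _)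

lemma measureReal_inter_le_mul_of_cond_le [IsFiniteMeasure μ] {s t : Set Ω} {b : ℝ}
    (h : μ s ≠ 0 → (μ[|s]).real t ≤ b) : μ.real (s ∩ t) ≤ μ.real s * b := by
  by_cases h0 : μ s = 0
  · simp [measureReal_def, h0, measure_mono_null Set.inter_subset_left h0]
  have hcond : μ.real s * (μ[|s]).real t = (μ.restrict s).real t := by
    simp only [ProbabilityTheory.cond, measureReal_def, Measure.smul_apply, smul_eq_mul,
      ENNReal.toReal_mul, ENNReal.toReal_inv]
    exact mul_inv_cancel_left₀ (ENNReal.toReal_ne_zero.mpr ⟨h0, measure_ne_top μ s⟩) _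
  calc μ.real (s ∩ t) ≤ (μ.restrict s).real t := by
        rw [Set.inter_comm]
        exact ENNReal.toReal_mono (by finiteness) (Measure.le_restrict_apply s t)
    _ = μ.real s * (μ[|s]).real t := hcond.symm
    _ ≤ μ.real s * b := by gcongr; exact h h0

end ClassDecomposition

theorem generalization_bound_within_class_variance_general {Ω : Type*} [MeasurableSpace Ω]
    (μ : Measure Ω) [IsProbabilityMeasure μ] {d m K : ℕ}
    (X : Ω → Fin d → ℝ) (Y : Ω → Fin K)
    (g : (Fin d → ℝ) → Fin m → ℝ)
    (hgL2 : ∀ c : Fin K, ∀ j : Fin m,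
      MemLp (fun ω => g (X ω) j) 2 (μ[|{ω | Y ω = c}]))
    (w : Fin K → Fin m → ℝ) (hw : ∀ c k : Fin K, k ≠ c → w c ≠ w k)
    (M : Fin K → Fin m → ℝ)
    (hM : ∀ c j, M c j = ∫ ω, g (X ω) j ∂(μ[|{ω | Y ω = c}]))
    (V : Fin K → ℝ)
    (hV : ∀ c, V c = ∫ ω, ∑ j, (g (X ω) j - M c j) ^ 2 ∂(μ[|{ω | Y ω = c}])) :
    (μ {ω | ∃ k, k ≠ Y ω ∧ w (Y ω) ⬝ᵥ g (X ω) ≤ w k ⬝ᵥ g (X ω)}).toReal ≤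
      ∑ c : Fin K, (μ {ω | Y ω = c}).toReal *
        ∑ k ∈ univ \ {c},
          (1 + max (M c ⬝ᵥ ((Real.sqrt (∑ j, (w c j - w k j) ^ 2))⁻¹ • (w c - w k))) 0 ^ 2
              / V c)⁻¹ := by
  refine (measureReal_exists_ne_le_sum (μ := μ) Y
    fun c k => {ω | w c ⬝ᵥ g (X ω) ≤ w k ⬝ᵥ g (X ω)}).trans ?_
  simp_rw [mul_sum]
  gcongr with c _ k hk
  refine measureReal_inter_le_mul_of_cond_le fun h0 => ?_
  have := cond_isProbabilityMeasure (μ := μ) h0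
  have hwk : w c - w k ≠ 0 := sub_ne_zero.mpr (hw c k (by simpa using hk))
  simpa [hV c, sub_dotProduct] using
    measureReal_dotProduct_nonpos_le (hgL2 c) hwk (hM c)

/-- Generalization bound via population within-class variance: for a `K`-class
classifier `f(x) = W g(x)` with rows `w₁,…,w_K` (pairwise distinct), the
misclassification probability (ties counted as errors) is at most
`Σ_c p_Y(c) Σ_{k≠c} (1 + max{⟨μ_c, (w_c−w_k)/‖w_c−w_k‖⟩, 0}² / V_c)⁻¹`,
where `μ_c = E[g(X) | Y=c]` and `V_c = E[‖g(X) − μ_c‖² | Y=c]`. -/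
theorem generalization_bound_within_class_variance {Ω : Type*} [MeasurableSpace Ω]
    (μ : Measure Ω) [IsProbabilityMeasure μ] {d m K : ℕ}
    (X : Ω → Fin d → ℝ) (Y : Ω → Fin K)
    (hX : Measurable X) (hY : Measurable Y)
    (g : (Fin d → ℝ) → Fin m → ℝ) (hg : Measurable g)
    (hgL2 : ∀ c : Fin K, ∀ j : Fin m,
      MemLp (fun ω => g (X ω) j) 2 (μ[|{ω | Y ω = c}]))
    (w : Fin K → Fin m → ℝ) (hw : ∀ c k : Fin K, k ≠ c → w c ≠ w k)
    (M : Fin K → Fin m → ℝ)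
    (hM : ∀ c j, M c j = ∫ ω, g (X ω) j ∂(μ[|{ω | Y ω = c}]))
    (V : Fin K → ℝ)
    (hV : ∀ c, V c = ∫ ω, ∑ j, (g (X ω) j - M c j) ^ 2 ∂(μ[|{ω | Y ω = c}])) :
    (μ {ω | ∃ k, k ≠ Y ω ∧ w (Y ω) ⬝ᵥ g (X ω) ≤ w k ⬝ᵥ g (X ω)}).toReal ≤
      ∑ c : Fin K, (μ {ω | Y ω = c}).toReal *
        ∑ k ∈ univ \ {c},
          (1 + max (M c ⬝ᵥ ((Real.sqrt (∑ j, (w c j - w k j) ^ 2))⁻¹ • (w c - w k))) 0 ^ 2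
              / V c)⁻¹ :=
  generalization_bound_within_class_variance_general μ X Y g hgL2 w hw M hM V hV
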